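/- arXiv:math/0701545 — 2 statements merged into one kernel-verified Lean document; each statement's English description precedes it below -/
import Mathlib

section
/- Let p be a positive integer and λ ∈ X^+(n) a p-restricted big weight, with i and j its smallest and largest removable rows, N = i − j − λ_i + λ_{j+1} + p + 1 and a = j + λ_i − λ_{j+1} − p − 1. Then the indices are in range (1 ≤ a+1, a+N = i, and j+N ≤ n, with the two ranges {a+1,…,i} and {j+1,…,j+N} disjoint and N ≥ 1), and the resulting n-tuple hat λ is weakly decreasing, i.e. hat λ ∈ X^+(n). -/
/-!
Passing from `λ` to `hat λ` lowers the block of rows `a+1, …, i` and raises the block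
`j+1, …, j+N` by one. The difference between neighbouring rows can only shrink across the
boundaries `i | i+1` and `j | j+1`, and there it shrinks by one (by two if `i = j`); since
`i` and `j` are removable and `λ_i - λ_{j+1} > 1`, `hat λ` stays weakly decreasing.
The range conditions are the numerical inequalities in the definition of big.
-/

/-- `l` (one-based, entries `l 1, …, l n`) is a dominant weight of `X⁺(n)`:
weakly decreasing on positions `1, …, n`. -/
def Dominant (n : ℕ) (l : ℕ → ℤ) : Prop :=
  ∀ i : ℕ, 1 ≤ i → i < n → l (i + 1) ≤ l i

def Removable (n : ℕ) (l : ℕ → ℤ) (i : ℕ) : Prop :=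
  1 ≤ i ∧ i < n ∧ l (i + 1) < l i

def PRestricted (p n : ℕ) (l : ℕ → ℤ) : Prop :=
  ∀ i : ℕ, 1 ≤ i → i < n → l i - l (i + 1) < (p : ℤ)

def IsSmallestRemovable (n : ℕ) (l : ℕ → ℤ) (i : ℕ) : Prop :=
  Removable n l i ∧ ∀ k : ℕ, Removable n l k → i ≤ k

def IsLargestRemovable (n : ℕ) (l : ℕ → ℤ) (j : ℕ) : Prop :=
  Removable n l j ∧ ∀ k : ℕ, Removable n l k → k ≤ j

open Classical in
/-- `ψ_n(l) = j - i + l i - l (j+1)` where `i`, `j` are the smallest and largest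
removable rows of `l`; and `ψ_n(l) = 0` if `l` has no removable row. -/
noncomputable def psi (n : ℕ) (l : ℕ → ℤ) : ℤ :=
  if h : ∃ i : ℕ, Removable n l i then
    (Nat.findGreatest (Removable n l) n : ℤ) - (Nat.find h : ℤ)
      + l (Nat.find h) - l (Nat.findGreatest (Removable n l) n + 1)
  else 0

def Big (p n : ℕ) (l : ℕ → ℤ) : Prop :=
  ∃ i j : ℕ, IsSmallestRemovable n l i ∧ IsLargestRemovable n l j ∧
    (j : ℤ) - (i : ℤ) + l i - l (j + 1) ≤ (p : ℤ) ∧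
    1 < l i - l (j + 1) ∧
    (p : ℤ) ≤ (j : ℤ) - 1 + l i - l (j + 1) ∧
    (i : ℤ) - l i + l (j + 1) + (p : ℤ) + 1 ≤ (n : ℤ)

/-- For big `l` with smallest and largest removable rows `i`, `j`, setting
`a = j + l i - l (j+1) - p - 1` and `N = i - j - l i + l (j+1) + p + 1`, the weight
`hat l` is obtained from `l` by decreasing rows `a+1, …, a+N` by `1` and increasing
rows `j+1, …, j+N` by `1`. -/
def hatl (p : ℕ) (l : ℕ → ℤ) (i j : ℕ) (k : ℕ) : ℤ :=
  l k
    - (if (j : ℤ) + l i - l (j + 1) - (p : ℤ) - 1 + 1 ≤ (k : ℤ) ∧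
          (k : ℤ) ≤ (j : ℤ) + l i - l (j + 1) - (p : ℤ) - 1 +
            ((i : ℤ) - (j : ℤ) - l i + l (j + 1) + (p : ℤ) + 1) then 1 else 0)
    + (if (j : ℤ) + 1 ≤ (k : ℤ) ∧
          (k : ℤ) ≤ (j : ℤ) + ((i : ℤ) - (j : ℤ) - l i + l (j + 1) + (p : ℤ) + 1)
        then 1 else 0)

theorem IsSmallestRemovable.unique {n : ℕ} {l : ℕ → ℤ} {i i' : ℕ}
    (hi : IsSmallestRemovable n l i) (hi' : IsSmallestRemovable n l i') : i = i' :=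
  le_antisymm (hi.2 i' hi'.1) (hi'.2 i hi.1)

theorem IsLargestRemovable.unique {n : ℕ} {l : ℕ → ℤ} {j j' : ℕ}
    (hj : IsLargestRemovable n l j) (hj' : IsLargestRemovable n l j') : j = j' :=
  le_antisymm (hj'.2 j hj.1) (hj.2 j' hj'.1)

theorem IsSmallestRemovable.le_of_isLargestRemovable {n : ℕ} {l : ℕ → ℤ} {i j : ℕ}
    (hi : IsSmallestRemovable n l i) (hj : IsLargestRemovable n l j) : i ≤ j :=
  hi.2 j hj.1

theorem Big.bounds {p n : ℕ} {l : ℕ → ℤ} (hbig : Big p n l) {i j : ℕ}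
    (hi : IsSmallestRemovable n l i) (hj : IsLargestRemovable n l j) :
    (j : ℤ) - (i : ℤ) + l i - l (j + 1) ≤ (p : ℤ) ∧
    1 < l i - l (j + 1) ∧
    (p : ℤ) ≤ (j : ℤ) - 1 + l i - l (j + 1) ∧
    (i : ℤ) - l i + l (j + 1) + (p : ℤ) + 1 ≤ (n : ℤ) := by
  obtain ⟨i', j', hi', hj', hbounds⟩ := hbig
  rwa [hi.unique hi', hj.unique hj']

namespace Dominant

variable {n : ℕ} {l : ℕ → ℤ}

theorem sub_ite_Icc (hl : Dominant n l) (s : ℤ) {t : ℕ} (ht : l (t + 1) < l t) :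
    Dominant n fun k => l k - if s ≤ (k : ℤ) ∧ (k : ℤ) ≤ t then 1 else 0 := by
  intro k hk1 hkn
  have := hl k hk1 hkn
  dsimp only
  rcases eq_or_ne k t with rfl | hkt <;> split_ifs <;> omega

theorem add_ite_Icc (hl : Dominant n l) {u : ℕ} (v : ℤ) (hu : l (u + 1) < l u) :
    Dominant n fun k => l k + if (u : ℤ) + 1 ≤ k ∧ (k : ℤ) ≤ v then 1 else 0 := by
  intro k hk1 hkn
  have := hl k hk1 hkn
  dsimp only
  rcases eq_or_ne k u with rfl | hku <;> split_ifs <;> omega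

end Dominant

theorem hatl_eq (p : ℕ) (l : ℕ → ℤ) (i j : ℕ) :
    hatl p l i j = fun k =>
      (l k - if (j : ℤ) + l i - l (j + 1) - p ≤ k ∧ (k : ℤ) ≤ i then 1 else 0)
        + if (j : ℤ) + 1 ≤ k ∧
            (k : ℤ) ≤ (j : ℤ) + ((i : ℤ) - (j : ℤ) - l i + l (j + 1) + (p : ℤ) + 1)
          then 1 else 0 := by
  have hend :
      (j : ℤ) + l i - l (j + 1) - p - 1 + ((i : ℤ) - j - l i + l (j + 1) + p + 1) = i := by
    ring
  funext k
  simp only [hatl, sub_add_cancel, hend]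

/-- If `i = j`, row `j` itself is lowered, so the drop `l j - l (j + 1)` has to be at least `2`. -/
theorem sub_ite_Icc_succ_lt {l : ℕ → ℤ} {i j : ℕ} (s : ℤ) (hij : i ≤ j)
    (hj : l (j + 1) < l j) (hgap : 1 < l i - l (j + 1)) :
    (l (j + 1) - if s ≤ ((j + 1 : ℕ) : ℤ) ∧ ((j + 1 : ℕ) : ℤ) ≤ i then 1 else 0) <
      l j - if s ≤ (j : ℤ) ∧ (j : ℤ) ≤ i then 1 else 0 := by
  rcases hij.eq_or_lt with rfl | hlt <;> split_ifs <;> omega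

theorem stmt1_general (p n : ℕ) (l : ℕ → ℤ)
    (hdom : Dominant n l) (hbig : Big p n l) :
    ∀ i j : ℕ, IsSmallestRemovable n l i → IsLargestRemovable n l j →
      let a : ℤ := (j : ℤ) + l i - l (j + 1) - (p : ℤ) - 1
      let N : ℤ := (i : ℤ) - (j : ℤ) - l i + l (j + 1) + (p : ℤ) + 1
      1 ≤ a + 1 ∧
      a + N = (i : ℤ) ∧
      (j : ℤ) + N ≤ (n : ℤ) ∧
      Disjoint (Set.Icc (a + 1) (a + N)) (Set.Icc ((j : ℤ) + 1) ((j : ℤ) + N)) ∧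
      1 ≤ N ∧
      Dominant n (hatl p l i j) := by
  intro i j hi hj
  obtain ⟨hN, hgap, ha, hjN⟩ := hbig.bounds hi hj
  have hij := hi.le_of_isLargestRemovable hj
  refine ⟨by omega, by ring, by omega, Set.disjoint_left.2 fun x hx hy => ?_, by omega, ?_⟩
  · simp only [Set.mem_Icc] at hx hy
    omega
  have hlow := hdom.sub_ite_Icc ((j : ℤ) + l i - l (j + 1) - p) hi.1.2.2
  rw [hatl_eq]
  exact hlow.add_ite_Icc _ (sub_ite_Icc_succ_lt _ hij hj.1.2.2 hgap)

/-- For a `p`-restricted big weight `l ∈ X⁺(n)` with smallest and largest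
removable rows `i`, `j`, put `N = i - j - l i + l (j+1) + p + 1` and
`a = j + l i - l (j+1) - p - 1`.  Then the indices are in range
(`1 ≤ a + 1`, `a + N = i`, `j + N ≤ n`, the ranges `{a+1, …, i}` and `{j+1, …, j+N}` are
disjoint, and `N ≥ 1`), and `hat l` is weakly decreasing, i.e. `hat l ∈ X⁺(n)`. -/
theorem stmt1 (p n : ℕ) (hp : 1 ≤ p) (l : ℕ → ℤ)
    (hdom : Dominant n l) (hres : PRestricted p n l) (hbig : Big p n l) :
    ∀ i j : ℕ, IsSmallestRemovable n l i → IsLargestRemovable n l j →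
      let a : ℤ := (j : ℤ) + l i - l (j + 1) - (p : ℤ) - 1
      let N : ℤ := (i : ℤ) - (j : ℤ) - l i + l (j + 1) + (p : ℤ) + 1
      1 ≤ a + 1 ∧
      a + N = (i : ℤ) ∧
      (j : ℤ) + N ≤ (n : ℤ) ∧
      Disjoint (Set.Icc (a + 1) (a + N)) (Set.Icc ((j : ℤ) + 1) ((j : ℤ) + N)) ∧
      1 ≤ N ∧
      Dominant n (hatl p l i j) :=
  stmt1_general p n l hdom hbig
end

section
/- Let p be a positive integer and λ ∈ X^+(n) a p-restricted weight with ψ_n(λ) ≤ p and λ_n = 0, and suppose λ is NOT big. Put m = Σ_{k=1}^n λ_k and ν = (λ_1,…,λ_n, 0^m) ∈ X^+(n+m). Then either ν is not big, or ν is big and (hat ν)_{n+1} > 0. -/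
theorem removable_eq_of_extend_by_zero {n m : ℕ} {l ν : ℕ → ℤ} (hlast : l n = 0)
    (hν : ∀ k : ℕ, ν k = if k ≤ n then l k else 0) :
    Removable (n + m) ν = Removable n l := by
  funext k
  apply propext
  constructor
  · rintro ⟨hk1, hkn, hdrop⟩
    have hk : k < n := by
      by_contra! hk
      obtain rfl | hk := hk.eq_or_lt
      · simp [hν, hlast] at hdrop
      · simp [hν, hk.not_ge, (hk.trans (Nat.lt_succ_self k)).not_ge] at hdrop
    refine ⟨hk1, hk, ?_⟩
    rwa [hν, hν, if_pos hk.le, if_pos (Nat.succ_le_of_lt hk)] at hdrop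
  · rintro ⟨hk1, hk, hdrop⟩
    refine ⟨hk1, by omega, ?_⟩
    rwa [hν, hν, if_pos hk.le, if_pos (Nat.succ_le_of_lt hk)]

-- `a + N = i` and `j + N = i - l i + l (j+1) + p + 1`.
theorem hatl_eq_add_one {p : ℕ} {l : ℕ → ℤ} {i j k : ℕ} (hik : i < k) (hjk : j < k)
    (hk : (k : ℤ) ≤ i - l i + l (j + 1) + p + 1) :
    hatl p l i j k = l k + 1 := by
  rw [hatl, if_neg (by omega), if_pos (by omega)]
  ring

theorem stmt9_general (p n : ℕ) (l : ℕ → ℤ)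
    (hlast : l n = 0)
    (hnotbig : ¬ Big p n l)
    (m : ℕ)
    (ν : ℕ → ℤ) (hν : ∀ k : ℕ, ν k = if k ≤ n then l k else 0) :
    ¬ Big p (n + m) ν ∨
    (Big p (n + m) ν ∧
      ∀ i j : ℕ, IsSmallestRemovable (n + m) ν i → IsLargestRemovable (n + m) ν j →
        0 < hatl p ν i j (n + 1)) := by
  rw [or_iff_not_imp_left, not_not]
  refine fun hB => ⟨hB, fun i j hsi hlj => ?_⟩
  obtain ⟨i', j', hsi', hlj', h1, h2, h3, -⟩ := hB
  obtain rfl := hsi.unique hsi'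
  obtain rfl := hlj.unique hlj'
  have hrem := removable_eq_of_extend_by_zero (m := m) hlast hν
  have hi : IsSmallestRemovable n l i := by simpa only [IsSmallestRemovable, hrem] using hsi
  have hj : IsLargestRemovable n l j := by simpa only [IsLargestRemovable, hrem] using hlj
  have hνi : ν i = l i := by rw [hν, if_pos hi.1.2.1.le]
  have hνj : ν (j + 1) = l (j + 1) := by rw [hν, if_pos (Nat.succ_le_of_lt hj.1.2.1)]
  rw [hνi, hνj] at h1 h2 h3
  have hlong : (n : ℤ) < i - l i + l (j + 1) + p + 1 := by
    by_contra! h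
    exact hnotbig ⟨i, j, hi, hj, h1, h2, h3, h⟩
  have hin := hi.1.2.1
  have hjn := hj.1.2.1
  rw [hatl_eq_add_one (by omega) (by omega) (by rw [hνi, hνj]; push_cast; omega), hν,
    if_neg (by omega)]
  norm_num

/-- Let `p ≥ 1` and `l ∈ X⁺(n)` a `p`-restricted weight with
`ψ_n(l) ≤ p` and `l n = 0`, and suppose `l` is NOT big.  Put `m = l 1 + ⋯ + l n` and
`ν = (l 1, …, l n, 0^m) ∈ X⁺(n+m)`.  Then either `ν` is not big, or `ν` is big and
`(hat ν)_{n+1} > 0`. -/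
theorem stmt9 (p n : ℕ) (hp : 1 ≤ p) (hn : 1 ≤ n) (l : ℕ → ℤ)
    (hdom : Dominant n l) (hlast : l n = 0)
    (hres : PRestricted p n l) (hpsi : psi n l ≤ (p : ℤ))
    (hnotbig : ¬ Big p n l)
    (m : ℕ) (hm : (m : ℤ) = ∑ k ∈ Finset.Icc 1 n, l k)
    (ν : ℕ → ℤ) (hν : ∀ k : ℕ, ν k = if k ≤ n then l k else 0) :
    ¬ Big p (n + m) ν ∨
    (Big p (n + m) ν ∧
      ∀ i j : ℕ, IsSmallestRemovable (n + m) ν i → IsLargestRemovable (n + m) ν j →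
        0 < hatl p ν i j (n + 1)) :=
  stmt9_general p n l hlast hnotbig m ν hν
end
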